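/- arXiv:1309.3011 — 2 statements merged into one kernel-verified Lean document; each statement's English description precedes it below -/
import Mathlib

section
/- Let S be a set of circular pairs on n boundary vertices containing (∅;∅). If S has the (i,i+1)-boundary edge property for every i (indices modulo n) and the i-boundary spike property for every i, then S contains every circular pair on n boundary vertices. -/
namespace CircularPlanar

/-- A "pre-pair": an ordered pair of lists of boundary vertices.  The boundary
vertices are labeled by `Fin n`, where `i : Fin n` represents the vertex with
label `i+1`, and the labels `1, …, n` occur in clockwise order. -/
abbrev PrePair (n : ℕ) := List (Fin n) × List (Fin n)

/-- The identification `(P;Q) ↦ (Q̃;P̃)`. -/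
def cpFlip {n : ℕ} (pq : PrePair n) : PrePair n := (pq.2.reverse, pq.1.reverse)

/-- A list of boundary vertices occurs in clockwise cyclic order if some
rotation of it is strictly increasing. -/
def ClockwiseCyclic {n : ℕ} (l : List (Fin n)) : Prop :=
  ∃ k : ℕ, List.Chain' (· < ·) (l.rotate k)

/-- `(P;Q)` is a circular pair if `P`, `Q` are disjoint tuples of boundary
vertices of equal length, and `p_1, …, p_k, q_k, …, q_1` is in clockwise
cyclic order. -/
def IsCircularPair {n : ℕ} (pq : PrePair n) : Prop :=
  pq.1.length = pq.2.length ∧ pq.1.Nodup ∧ pq.2.Nodup ∧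
    (∀ x ∈ pq.1, x ∉ pq.2) ∧ ClockwiseCyclic (pq.1 ++ pq.2.reverse)

/-- The setoid identifying `(P;Q)` with `(Q̃;P̃)`. -/
instance cpSetoid (n : ℕ) : Setoid (PrePair n) where
  r x y := x = y ∨ x = cpFlip y
  iseqv := by
    refine ⟨fun x => Or.inl rfl, ?_, ?_⟩
    · rintro x y (rfl | rfl)
      · exact Or.inl rfl
      · right; simp [cpFlip]
    · rintro x y z (rfl | rfl) (rfl | rfl)
      · exact Or.inl rfl
      · exact Or.inr rfl
      · exact Or.inr rfl
      · left; simp [cpFlip]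

/-- Circular pairs up to the identification `(P;Q) = (Q̃;P̃)`. -/
def CircPair (n : ℕ) := Quotient (cpSetoid n)

/-- The class of a pre-pair. -/
def cp {n : ℕ} (pq : PrePair n) : CircPair n := Quotient.mk (cpSetoid n) pq

/-- The boundary vertex labeled `1`. -/
def firstV (n : ℕ) (hn : 0 < n) : Fin n := ⟨0, hn⟩

/-- The boundary vertex labeled `n`. -/
def lastV (n : ℕ) (hn : 0 < n) : Fin n := ⟨n - 1, by omega⟩

/-- `InsPair P Q x y pq` says that `pq` is a circular pair representing
`(P+x; Q+y)`: its tuples consist of `x` inserted into `P` resp. `y` inserted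
into `Q`. -/
def InsPair {n : ℕ} (P Q : List (Fin n)) (x y : Fin n) (pq : PrePair n) : Prop :=
  IsCircularPair pq ∧ pq.1.Perm (x :: P) ∧ pq.2.Perm (y :: Q)

/-- The vertex clockwise-next after `i`, i.e. `i+1` modulo `n`. -/
def cyclSucc {n : ℕ} (i : Fin n) : Fin n :=
  ⟨(i.val + 1) % n, Nat.mod_lt _ (Nat.lt_of_le_of_lt (Nat.zero_le _) i.isLt)⟩

/-- The `(i,i+1)`-boundary edge property. -/
def HasBEP (n : ℕ) (S : Set (CircPair n)) (i : Fin n) : Prop :=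
  ∀ P Q : List (Fin n), IsCircularPair (P, Q) → cp (P, Q) ∈ S →
    ∀ pq : PrePair n, InsPair P Q i (cyclSucc i) pq → cp pq ∈ S

/-- The `i`-boundary spike property. -/
def HasBSP (n : ℕ) (S : Set (CircPair n)) (i : Fin n) : Prop :=
  ∀ P Q : List (Fin n), IsCircularPair (P, Q) → cp (P, Q) ∈ S →
    ∀ x y : Fin n,
      (∃ pq : PrePair n, InsPair P Q x i pq ∧ cp pq ∈ S) →
      (∃ pq : PrePair n, InsPair P Q i y pq ∧ cp pq ∈ S) →
      ∀ pq : PrePair n, InsPair P Q x y pq → cp pq ∈ S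

/-! ## Weak separation and connections -/

open List

variable {n : ℕ}

/-- angle of `z` measured from `p` -/
def th (p z : Fin n) : ℕ := (z - p).val

lemma th_val (p z : Fin n) :
    th p z = if p.val ≤ z.val then z.val - p.val else z.val + n - p.val := by
  have hp := p.isLt; have hz := z.isLt
  simp only [th, Fin.sub_def]
  by_cases h : p.val ≤ z.val
  · rw [if_pos h]
    have h1 : n - p.val + z.val = (z.val - p.val) + n := by omega
    rw [h1, Nat.add_mod_right, Nat.mod_eq_of_lt (by omega)]
  · rw [if_neg h, Nat.mod_eq_of_lt (by omega)]
    omega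

lemma th_self (p : Fin n) : th p p = 0 := by
  have := p.isLt
  rw [th_val, if_pos le_rfl, Nat.sub_self]

lemma th_lt (p z : Fin n) : th p z < n := (z - p).isLt

lemma th_pos_of_ne (hn : 0 < n) {p z : Fin n} (h : z ≠ p) : 0 < th p z := by
  haveI : NeZero n := ⟨hn.ne'⟩
  rcases Nat.eq_zero_or_pos (th p z) with h0 | h0
  · exfalso; apply h
    have : z - p = 0 := Fin.ext (by simpa [th] using h0)
    exact sub_eq_zero.mp this
  · exact h0

lemma cc_iff_pairwise {l : List (Fin n)} :
    ClockwiseCyclic l ↔ ∃ k, List.Pairwise (· < ·) (l.rotate k) := by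
  simp [ClockwiseCyclic, List.Chain', List.isChain_iff_pairwise]

/-- rotating backwards -/
lemma cc_of_rotate {l : List (Fin n)} {m : ℕ} (h : ClockwiseCyclic (l.rotate m)) :
    ClockwiseCyclic l := by
  obtain ⟨k, hk⟩ := h
  exact ⟨m + k, by rwa [rotate_rotate] at hk⟩

/-- rotating forwards -/
lemma cc_rotate {l : List (Fin n)} (h : ClockwiseCyclic l) (m : ℕ) :
    ClockwiseCyclic (l.rotate m) := by
  obtain ⟨k, hk⟩ := h
  rcases Nat.eq_zero_or_pos l.length with hl | hl
  · rw [List.length_eq_zero_iff] at hl; subst hl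
    exact ⟨0, by simpa using hk⟩
  · refine ⟨(l.length - m % l.length) + k, ?_⟩
    rw [rotate_rotate]
    have h1 : m + ((l.length - m % l.length) + k) = (l.length * (m / l.length + 1)) + k := by
      have h2 := Nat.div_add_mod m l.length
      have h3 := Nat.mod_lt m hl
      ring_nf
      omega
    rw [h1, ← rotate_rotate, rotate_length_mul]
    exact hk

lemma cc_sublist {l l' : List (Fin n)} (hs : l' <+ l) (h : ClockwiseCyclic l) :
    ClockwiseCyclic l' := by
  rw [cc_iff_pairwise] at h ⊢
  obtain ⟨k, hk⟩ := h
  rcases Nat.eq_zero_or_pos l.length with hl | hl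
  · rw [List.length_eq_zero_iff] at hl; subst hl
    rw [List.sublist_nil] at hs; subst hs; exact ⟨0, by simp⟩
  · rw [← rotate_mod] at hk
    have hkl : k % l.length ≤ l.length := (Nat.mod_lt k hl).le
    rw [rotate_eq_drop_append_take hkl] at hk
    have hsp : l' <+ l.take (k % l.length) ++ l.drop (k % l.length) := by
      rwa [take_append_drop]
    obtain ⟨u, v, rfl, hu, hv⟩ := sublist_append_iff.mp hsp
    refine ⟨u.length, ?_⟩
    have hlen : u.length ≤ (u ++ v).length := by simp
    rw [rotate_eq_drop_append_take hlen, drop_left, take_left]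
    exact hk.sublist (hv.append hu)

lemma dropWhile_small {p : Fin n} :
    ∀ {l : List (Fin n)}, List.Pairwise (fun a b => th p a < th p b) l →
      ∀ z ∈ l.dropWhile (fun z => decide (p.val ≤ z.val)), z.val < p.val := by
  intro l
  induction l with
  | nil => simp
  | cons a t ih =>
    intro h
    by_cases ha : p.val ≤ a.val
    · rw [dropWhile_cons, if_pos (by simp only [decide_eq_true_eq]; exact ha)]
      exact ih (List.pairwise_cons.mp h).2
    · rw [dropWhile_cons, if_neg (by simp only [decide_eq_true_eq]; exact ha)]
      intro z hz
      rcases List.mem_cons.mp hz with rfl | hz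
      · omega
      · have hth : th p a < th p z := (List.pairwise_cons.mp h).1 z hz
        rw [th_val, th_val, if_neg ha] at hth
        by_contra hc
        rw [if_pos (by omega)] at hth
        have := z.isLt; omega

/-- From pairwise angular order, conclude clockwise cyclic. -/
lemma cc_of_pairwise_th {p : Fin n} {l : List (Fin n)}
    (h : List.Pairwise (fun a b => th p a < th p b) l) : ClockwiseCyclic l := by
  have hp := p.isLt
  classical
  have hsplit : l.takeWhile (fun z => decide (p.val ≤ z.val)) ++
      l.dropWhile (fun z => decide (p.val ≤ z.val)) = l :=
    takeWhile_append_dropWhile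
  set t1 := l.takeWhile (fun z => decide (p.val ≤ z.val)) with ht1
  set t2 := l.dropWhile (fun z => decide (p.val ≤ z.val)) with ht2
  have h1 : ∀ z ∈ t1, p.val ≤ z.val := fun z hz => by
    have := mem_takeWhile_imp hz; simpa using this
  have h2 : ∀ z ∈ t2, z.val < p.val := dropWhile_small h
  have hsub1 : List.Pairwise (fun a b => th p a < th p b) t1 :=
    h.sublist (takeWhile_sublist _)
  have hsub2 : List.Pairwise (fun a b => th p a < th p b) t2 :=
    h.sublist (dropWhile_sublist _)
  have hpw : List.Pairwise (· < ·) (t2 ++ t1) := by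
    rw [pairwise_append]
    refine ⟨?_, ?_, ?_⟩
    · refine hsub2.imp_of_mem ?_
      intro a b ha hb hab
      have ha' := h2 a ha; have hb' := h2 b hb
      rw [th_val, th_val, if_neg (by omega), if_neg (by omega)] at hab
      exact Fin.lt_def.mpr (by have := a.isLt; have := b.isLt; omega)
    · refine hsub1.imp_of_mem ?_
      intro a b ha hb hab
      have ha' := h1 a ha; have hb' := h1 b hb
      rw [th_val, th_val, if_pos ha', if_pos hb'] at hab
      exact Fin.lt_def.mpr (by omega)
    · intro a ha b hb
      exact Fin.lt_def.mpr (by have := h2 a ha; have := h1 b hb; omega)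
  apply cc_of_rotate (m := t1.length)
  rw [cc_iff_pairwise]
  refine ⟨0, ?_⟩
  have hl1 : t1.length ≤ l.length := by
    conv_rhs => rw [← hsplit]
    simp
  rw [rotate_zero, rotate_eq_drop_append_take hl1]
  have hd : l.drop t1.length = t2 := by conv_lhs => rw [← hsplit, drop_left]
  have htk : l.take t1.length = t1 := by conv_lhs => rw [← hsplit, take_left]
  rw [hd, htk]
  exact hpw

/-- Conversely, a clockwise cyclic list starting at `p` is pairwise angular-sorted. -/
lemma pairwise_th_of_cc {p : Fin n} {t : List (Fin n)} (h : ClockwiseCyclic (p :: t)) :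
    List.Pairwise (fun a b => th p a < th p b) (p :: t) := by
  have hp := p.isLt
  rw [cc_iff_pairwise] at h
  obtain ⟨k, hk⟩ := h
  have hlen : 0 < (p :: t).length := by simp
  have hslen : ((p :: t).rotate k).length = (p :: t).length := length_rotate _ _
  -- p :: t is a rotation of s := (p :: t).rotate k
  have hback : p :: t = ((p :: t).rotate k).rotate ((p :: t).length - k % (p :: t).length) := by
    rw [rotate_rotate]
    have h2 := Nat.div_add_mod k (p :: t).length
    have h3 := Nat.mod_lt k hlen
    have h1 : k + ((p :: t).length - k % (p :: t).length) =
        (p :: t).length * (k / (p :: t).length + 1) := by ring_nf; omega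
    rw [h1, rotate_length_mul]
  rw [← rotate_mod] at hback
  generalize hs : (p :: t).rotate k = s at hk hslen hback
  set m := ((p :: t).length - k % (p :: t).length) % s.length with hm
  have hm0 : 0 < s.length := by omega
  have hmlt : m < s.length := Nat.mod_lt _ hm0
  rw [rotate_eq_drop_append_take hmlt.le] at hback
  have hsed : s = s.take m ++ s.drop m := (take_append_drop m s).symm
  have hdne : s.drop m ≠ [] := by
    intro hdn
    have := congrArg List.length hdn
    rw [length_drop] at this
    simp at this; omega
  obtain ⟨p', d', hd'⟩ := List.exists_cons_of_ne_nil hdne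
  rw [hd'] at hback
  have hpp' : p' = p := by
    have := hback; simp only [cons_append] at this
    exact (List.cons.injEq _ _ _ _ ▸ this).1.symm
  have htt : t = d' ++ s.take m := by
    have := hback; simp only [cons_append] at this
    exact (List.cons.injEq _ _ _ _ ▸ this).2
  subst hpp'
  rw [hsed, hd'] at hk
  rw [pairwise_append] at hk
  obtain ⟨hke, hkd, hked⟩ := hk
  have hed : ∀ z ∈ s.take m, z < p' := fun z hz => hked z hz p' (by simp)
  have hd'' : ∀ z ∈ d', p' < z := (List.pairwise_cons.mp hkd).1
  have hkd' : List.Pairwise (· < ·) d' := (List.pairwise_cons.mp hkd).2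
  rw [htt, pairwise_cons]
  constructor
  · intro z hz
    rw [th_self]
    rcases List.mem_append.mp hz with hz | hz
    · have h5 := Fin.lt_def.mp (hd'' z hz)
      rw [th_val, if_pos (by omega)]
      omega
    · have h5 := Fin.lt_def.mp (hed z hz)
      have hzl := z.isLt
      rw [th_val, if_neg (by omega)]
      omega
  · rw [pairwise_append]
    refine ⟨?_, ?_, ?_⟩
    · refine hkd'.imp_of_mem ?_
      intro a b ha hb hab
      have ha' := Fin.lt_def.mp (hd'' a ha); have hb' := Fin.lt_def.mp (hd'' b hb)
      rw [th_val, th_val, if_pos (by omega), if_pos (by omega)]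
      have := Fin.lt_def.mp hab; omega
    · refine hke.imp_of_mem ?_
      intro a b ha hb hab
      have ha' := Fin.lt_def.mp (hed a ha); have hb' := Fin.lt_def.mp (hed b hb)
      rw [th_val, th_val, if_neg (by omega), if_neg (by omega)]
      have := Fin.lt_def.mp hab; have := b.isLt; omega
    · intro a ha b hb
      have ha' := Fin.lt_def.mp (hd'' a ha); have hb' := Fin.lt_def.mp (hed b hb)
      rw [th_val, th_val, if_pos (by omega), if_neg (by omega)]
      have := a.isLt; have := b.isLt; omega

/-- Key geometric lemma: insertion on the free arc between adjacent `p`, `q`. -/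
lemma key_insert {a b : List (Fin n)} {p q x : Fin n}
    (hcc : ClockwiseCyclic (a ++ p :: q :: b))
    (hx0 : 0 < th p x) (hxq : th p x < th p q) :
    x ∉ a ++ p :: q :: b ∧ ClockwiseCyclic (a ++ p :: x :: b) ∧
      ClockwiseCyclic (a ++ x :: q :: b) := by
  have hrot : (a ++ p :: q :: b).rotate a.length = p :: q :: (b ++ a) := by
    have hle : a.length ≤ (a ++ p :: q :: b).length := by simp
    rw [rotate_eq_drop_append_take hle, drop_left, take_left]
    simp
  have hcc2 : ClockwiseCyclic (p :: q :: (b ++ a)) := by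
    rw [← hrot]; exact cc_rotate hcc a.length
  have hpw := pairwise_th_of_cc hcc2
  have hqz : ∀ z ∈ b ++ a, th p q < th p z :=
    (List.pairwise_cons.mp (List.pairwise_cons.mp hpw).2).1
  have hpz : ∀ z ∈ b ++ a, th p p < th p z := fun z hz =>
    (List.pairwise_cons.mp hpw).1 z (by simp [List.mem_cons, hz])
  have hba : List.Pairwise (fun u v => th p u < th p v) (b ++ a) :=
    (List.pairwise_cons.mp (List.pairwise_cons.mp hpw).2).2
  refine ⟨?_, ?_, ?_⟩
  · intro hx
    have hx' : x ∈ p :: q :: (b ++ a) := by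
      rcases List.mem_append.mp hx with hx | hx
      · simp [hx]
      · rcases List.mem_cons.mp hx with rfl | hx
        · simp
        · rcases List.mem_cons.mp hx with rfl | hx
          · simp
          · simp [hx]
    rcases List.mem_cons.mp hx' with h' | hx'
    · rw [h', th_self] at hx0; omega
    rcases List.mem_cons.mp hx' with h' | hx'
    · rw [h'] at hxq; omega
    · have := hqz x hx'; omega
  · apply cc_of_rotate (m := a.length)
    have hrot2 : (a ++ p :: x :: b).rotate a.length = p :: x :: (b ++ a) := by
      have hle : a.length ≤ (a ++ p :: x :: b).length := by simp
      rw [rotate_eq_drop_append_take hle, drop_left, take_left]; simp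
    rw [hrot2]
    apply cc_of_pairwise_th (p := p)
    rw [pairwise_cons]
    refine ⟨?_, ?_⟩
    · intro z hz
      rw [th_self]
      rcases List.mem_cons.mp hz with h' | hz
      · rw [h']; omega
      · have := hpz z hz; rw [th_self] at this; omega
    · rw [pairwise_cons]
      exact ⟨fun z hz => lt_trans hxq (hqz z hz), hba⟩
  · apply cc_of_rotate (m := a.length)
    have hrot2 : (a ++ x :: q :: b).rotate a.length = x :: q :: (b ++ a) := by
      have hle : a.length ≤ (a ++ x :: q :: b).length := by simp
      rw [rotate_eq_drop_append_take hle, drop_left, take_left]; simp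
    rw [hrot2]
    apply cc_of_pairwise_th (p := p)
    rw [pairwise_cons]
    refine ⟨?_, (List.pairwise_cons.mp hpw).2⟩
    intro z hz
    rcases List.mem_cons.mp hz with h' | hz
    · rw [h']; exact hxq
    · exact lt_trans hxq (hqz z hz)


theorem statement_16 (n : ℕ) (hn : 0 < n) (S : Set (CircPair n))
    (hS : ∀ x ∈ S, ∃ pq : PrePair n, IsCircularPair pq ∧ x = cp pq)
    (hempty : cp (([] : List (Fin n)), ([] : List (Fin n))) ∈ S)
    (hbep : ∀ i : Fin n, HasBEP n S i) (hbsp : ∀ i : Fin n, HasBSP n S i) :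
    ∀ pq : PrePair n, IsCircularPair pq → cp pq ∈ S := by
  haveI : NeZero n := ⟨hn.ne'⟩
  suffices H : ∀ k, ∀ pq : PrePair n, IsCircularPair pq → pq.1.length = k → cp pq ∈ S from
    fun pq h => H pq.1.length pq h rfl
  intro k
  induction k with
  | zero =>
    rintro ⟨P, Q⟩ h hl
    simp only at hl
    have hP : P = [] := List.eq_nil_of_length_eq_zero hl
    have hQ : Q = [] := List.eq_nil_of_length_eq_zero (by rw [← h.1]; exact hl)
    rw [hP, hQ]
    exact hempty
  | succ k IH =>
    rintro ⟨P, Q⟩ h hl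
    simp only at hl
    have hPne : P ≠ [] := by intro h0; rw [h0] at hl; simp at hl
    obtain ⟨P', p0, hP⟩ := (List.eq_nil_or_concat P).resolve_left hPne
    rw [List.concat_eq_append] at hP
    have hQne : Q ≠ [] := by
      intro h0; have := h.1; rw [h0] at this; simp only at this
      rw [this] at hl; simp at hl
    obtain ⟨Q', q0, hQ⟩ := (List.eq_nil_or_concat Q).resolve_left hQne
    rw [List.concat_eq_append] at hQ
    subst hP; subst hQ
    have hk : P'.length = k := by simpa using hl
    suffices inner : ∀ d, ∀ p q : Fin n, IsCircularPair ((P' ++ [p], Q' ++ [q]) : PrePair n) →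
        th p q = d → cp ((P' ++ [p], Q' ++ [q]) : PrePair n) ∈ S from inner _ p0 q0 h rfl
    intro d
    induction d using Nat.strong_induction_on with
    | _ d ihd =>
    intro p q hcirc hd
    obtain ⟨hlen, hnp, hnq, hdisj, hcc⟩ := hcirc
    simp only at hlen hnp hnq hdisj hcc
    have hL : (P' ++ [p]) ++ (Q' ++ [q]).reverse = P' ++ p :: q :: Q'.reverse := by simp
    have hccL : ClockwiseCyclic (P' ++ p :: q :: Q'.reverse) := by rw [← hL]; exact hcc
    have hcirc' : IsCircularPair ((P', Q') : PrePair n) := by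
      refine ⟨?_, ?_, ?_, ?_, ?_⟩
      · simp only [List.length_append, List.length_cons, List.length_nil] at hlen ⊢; omega
      · exact List.Nodup.sublist (List.sublist_append_left _ _) hnp
      · exact List.Nodup.sublist (List.sublist_append_left _ _) hnq
      · intro x hx hxq; exact hdisj x (by simp [hx]) (by simp [hxq])
      · refine cc_sublist ?_ hccL
        exact ((List.sublist_cons_self q Q'.reverse).trans
          (List.sublist_cons_self p _)).append_left P'
    have hmem' : cp ((P', Q') : PrePair n) ∈ S := IH (P', Q') hcirc' hk
    have hpq : q ≠ p := by
      intro h'; subst h'; exact hdisj q (by simp) (by simp)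
    have hd0 : 0 < d := hd ▸ th_pos_of_ne hn hpq
    have hperm1 : (P' ++ [p]).Perm (p :: P') := List.perm_append_comm
    have hperm2 : (Q' ++ [q]).Perm (q :: Q') := List.perm_append_comm
    have hcircfull : IsCircularPair ((P' ++ [p], Q' ++ [q]) : PrePair n) :=
      ⟨hlen, hnp, hnq, hdisj, hcc⟩
    have hdn : d < n := hd ▸ th_lt p q
    by_cases hd1 : d = 1
    · -- boundary edge case
      have hn2 : 2 ≤ n := by omega
      have h1v : ((1 : Fin n)).val = 1 := by rw [Fin.val_one']; exact Nat.mod_eq_of_lt hn2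
      have hsub1 : q - p = 1 := Fin.ext (by rw [h1v]; show th p q = 1; omega)
      have hq' : q = p + 1 := by
        have := sub_eq_iff_eq_add.mp hsub1; rw [this]; exact add_comm _ _
      have hq : q = cyclSucc p := by
        apply Fin.ext; rw [hq']
        show ((p + 1 : Fin n)).val = (p.val + 1) % n
        rw [Fin.add_def, h1v]
      exact hbep p P' Q' hcirc' hmem' _
        ⟨hcircfull, hperm1, by rw [← hq]; exact hperm2⟩
    · -- boundary spike case
      have hd2 : 2 ≤ d := by omega
      have hn3 : 3 ≤ n := by omega
      have h1v : ((1 : Fin n)).val = 1 := by rw [Fin.val_one']; exact Nat.mod_eq_of_lt (by omega)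
      set i := p + 1 with hi
      have hthi : th p i = 1 := by
        show ((p + 1) - p).val = 1
        rw [add_sub_cancel_left, h1v]
      have hicycl : cyclSucc p = i := by
        apply Fin.ext
        show (p.val + 1) % n = ((p + 1 : Fin n)).val
        rw [Fin.add_def, h1v]
      obtain ⟨hxnot, hccA, hccB⟩ := key_insert (a := P') (b := Q'.reverse) (x := i) hccL
        (by omega) (by rw [hthi, hd]; omega)
      have hiP' : i ∉ P' := fun hh => hxnot (by simp [hh])
      have hip : i ≠ p := by
        intro hh; rw [hh, th_self] at hthi; omega
      have hiq : i ≠ q := by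
        intro hh; rw [hh] at hthi; omega
      have hiQ' : i ∉ Q' := fun hh => hxnot (by simp [hh])
      -- pair A = (P'+p, Q'+i)
      have hnqA : (Q' ++ [i]).Nodup := by
        rw [List.nodup_append]
        refine ⟨List.Nodup.sublist (List.sublist_append_left _ _) hnq, by simp, ?_⟩
        intro x hx hxi
        intro hy hxy; rw [List.mem_singleton] at hy; subst hy; subst hxy; exact hiQ' hx
      have hcircA : IsCircularPair ((P' ++ [p], Q' ++ [i]) : PrePair n) := by
        refine ⟨?_, hnp, hnqA, ?_, ?_⟩
        · simp only [List.length_append, List.length_cons, List.length_nil] at hlen ⊢; omega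
        · intro x hx hx2
          rcases List.mem_append.mp hx2 with hx2 | hx2
          · exact hdisj x hx (by simp [hx2])
          · rw [List.mem_singleton] at hx2; subst hx2
            rcases List.mem_append.mp hx with hx | hx
            · exact hiP' hx
            · rw [List.mem_singleton] at hx; exact hip hx
        · show ClockwiseCyclic ((P' ++ [p]) ++ (Q' ++ [i]).reverse)
          have : (P' ++ [p]) ++ (Q' ++ [i]).reverse = P' ++ p :: i :: Q'.reverse := by simp
          rw [this]; exact hccA
      have hmemA : cp ((P' ++ [p], Q' ++ [i]) : PrePair n) ∈ S :=
        hbep p P' Q' hcirc' hmem' _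
          ⟨hcircA, hperm1, by rw [hicycl]; exact List.perm_append_comm⟩
      -- pair B = (P'+i, Q'+q)
      have hnpB : (P' ++ [i]).Nodup := by
        rw [List.nodup_append]
        refine ⟨List.Nodup.sublist (List.sublist_append_left _ _) hnp, by simp, ?_⟩
        intro x hx hxi
        intro hy hxy; rw [List.mem_singleton] at hy; subst hy; subst hxy; exact hiP' hx
      have hcircB : IsCircularPair ((P' ++ [i], Q' ++ [q]) : PrePair n) := by
        refine ⟨?_, hnpB, hnq, ?_, ?_⟩
        · simp only [List.length_append, List.length_cons, List.length_nil] at hlen ⊢; omega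
        · intro x hx hx2
          rcases List.mem_append.mp hx with hx | hx
          · exact hdisj x (by simp [hx]) hx2
          · rw [List.mem_singleton] at hx; subst hx
            rcases List.mem_append.mp hx2 with hx2 | hx2
            · exact hiQ' hx2
            · rw [List.mem_singleton] at hx2; exact hiq hx2
        · show ClockwiseCyclic ((P' ++ [i]) ++ (Q' ++ [q]).reverse)
          have : (P' ++ [i]) ++ (Q' ++ [q]).reverse = P' ++ i :: q :: Q'.reverse := by simp
          rw [this]; exact hccB
      have hthiq : th i q = d - 1 := by
        have hqi : q - i = (q - p) - 1 := by rw [hi, sub_add_eq_sub_sub]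
        have hv : (q - p).val = d := hd
        show (q - i).val = d - 1
        rw [hqi, Fin.sub_def, h1v, hv]
        have heq : n - 1 + d = (d - 1) + n := by omega
        show (n - 1 + d) % n = d - 1
        rw [heq, Nat.add_mod_right]
        exact Nat.mod_eq_of_lt (by omega)
      have hmemB : cp ((P' ++ [i], Q' ++ [q]) : PrePair n) ∈ S :=
        ihd (d - 1) (by omega) i q hcircB hthiq
      exact hbsp i P' Q' hcirc' hmem' p q
        ⟨(P' ++ [p], Q' ++ [i]), ⟨hcircA, hperm1, List.perm_append_comm⟩, hmemA⟩
        ⟨(P' ++ [i], Q' ++ [q]), ⟨hcircB, List.perm_append_comm, hperm2⟩, hmemB⟩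
        (P' ++ [p], Q' ++ [q]) ⟨hcircfull, hperm1, hperm2⟩

end CircularPlanar
end

section
/- Let C be a set of pairwise weakly separated nonempty circular pairs on n boundary vertices, let E = ⋃_{(P;Q)∈C} E(P;Q), and let {a,b} ∈ E be an edge such that for every other edge {c,d} ∈ E, the vertices c and d do not both lie on the arc drawn from a clockwise to b (inclusive of endpoints). For a circular pair (P;Q), let J(P;Q) be the circular pair with connection set E(P;Q)∖{{a,b}} (that is, (P;Q) with the connection {a,b} removed if present, and (P;Q) itself otherwise). Then the circular pairs in { J(P;Q) : (P;Q) ∈ C } are pairwise weakly separated. -/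
namespace CircularPlanar

/-- Two subsets `A, B ⊆ {1,…,n}` are weakly separated. -/
def WeakSepSets {n : ℕ} (A B : Finset (Fin n)) : Prop :=
  ¬ ∃ a a' b b' : Fin n, a ∈ A \ B ∧ a' ∈ A \ B ∧ b ∈ B \ A ∧ b' ∈ B \ A ∧
      ((a < b ∧ b < a' ∧ a' < b') ∨ (b < a ∧ a < b' ∧ b' < a'))

/-- Two circular pairs `(P;Q)`, `(R;S)` are weakly separated. -/
def WeakSepCP {n : ℕ} (pq rs : PrePair n) : Prop :=
  WeakSepSets (pq.1.toFinset ∪ rs.1.toFinset) (pq.2.toFinset ∪ rs.2.toFinset) ∧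
  WeakSepSets (pq.1.toFinset ∪ rs.2.toFinset) (pq.2.toFinset ∪ rs.1.toFinset)

/-- The set of connections `E(P;Q) = {{p_i, q_i}}` of a circular pair. -/
def connFinset {n : ℕ} (pq : PrePair n) : Finset (Sym2 (Fin n)) :=
  ((pq.1.zip pq.2).map fun ab => Sym2.mk ab.1 ab.2).toFinset

/-- `x` lies on the arc drawn from `a` clockwise to `b`, inclusive. -/
def OnArc {n : ℕ} (a b x : Fin n) : Prop :=
  (x.val + n - a.val) % n ≤ (b.val + n - a.val) % n

/-- `Jop a b pq` removes the connection `{a,b}` from the circular pair `pq`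
(if present): it is the circular pair with connection set `E(P;Q) ∖ {{a,b}}`. -/
def Jop {n : ℕ} (a b : Fin n) (pq : PrePair n) : PrePair n :=
  ((((pq.1.zip pq.2).filter fun x => decide (Sym2.mk x.1 x.2 ≠ Sym2.mk a b)).map Prod.fst),
   (((pq.1.zip pq.2).filter fun x => decide (Sym2.mk x.1 x.2 ≠ Sym2.mk a b)).map Prod.snd))

/-- rotated coordinate -/
def gg {n : ℕ} (a x : Fin n) : ℕ := (x.val + n - a.val) % n

def gInc (w x y z : ℕ) : Prop := w < x ∧ x < y ∧ y < z

def Cyc4 (w x y z : ℕ) : Prop := gInc w x y z ∨ gInc x y z w ∨ gInc y z w x ∨ gInc z w x y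

lemma cyc4_rot {w x y z : ℕ} (h : Cyc4 w x y z) : Cyc4 x y z w := by
  unfold Cyc4 gInc at *; tauto

lemma cyc4_ne13 {w x y z : ℕ} (h : Cyc4 w x y z) : w ≠ y ∧ x ≠ z := by
  unfold Cyc4 gInc at h; omega

lemma cyc4_distinct {w x y z : ℕ} (h : Cyc4 w x y z) :
    w ≠ x ∧ w ≠ y ∧ w ≠ z ∧ x ≠ y ∧ x ≠ z ∧ y ≠ z := by
  unfold Cyc4 gInc at h; omega

lemma cyc4_shift {N K w x y z : ℕ} (hK : K ≤ N) (h1 : w < x) (h2 : x < y) (h3 : y < z)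
    (h4 : z < N) : Cyc4 ((w + K) % N) ((x + K) % N) ((y + K) % N) ((z + K) % N) := by
  have he : ∀ v : ℕ, v < N → (v + K < N ∧ (v + K) % N = v + K) ∨ (N ≤ v + K ∧ (v + K) % N = v + K - N) := by
    intro v hv
    rcases lt_or_ge (v + K) N with h | h
    · exact Or.inl ⟨h, Nat.mod_eq_of_lt h⟩
    · right
      refine ⟨h, ?_⟩
      rw [Nat.mod_eq_sub_mod h, Nat.mod_eq_of_lt (by omega)]
  have hw := he w (by omega); have hx := he x (by omega)
  have hy := he y (by omega); have hz := he z h4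
  unfold Cyc4 gInc
  rcases hw with hw | hw <;> rcases hx with hx | hx <;> rcases hy with hy | hy <;>
    rcases hz with hz | hz <;> omega

lemma gg_lt {n : ℕ} (a x : Fin n) : gg a x < n := Nat.mod_lt _ (a.pos)

lemma gg_self {n : ℕ} (a : Fin n) : gg a a = 0 := by
  unfold gg
  have : a.val + n - a.val = n := by omega
  simp [this]

lemma gg_inj {n : ℕ} (a : Fin n) {x y : Fin n} (h : gg a x = gg a y) : x = y := by
  unfold gg at h
  have hx := x.isLt; have hy := y.isLt; have ha := a.isLt
  have ex : (x.val + n - a.val) % n = x.val + n - a.val ∨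
      (n ≤ x.val + n - a.val ∧ (x.val + n - a.val) % n = x.val - a.val) := by
    rcases lt_or_ge (x.val + n - a.val) n with h' | h'
    · exact Or.inl (Nat.mod_eq_of_lt h')
    · right; refine ⟨h', ?_⟩
      rw [Nat.mod_eq_sub_mod h', Nat.mod_eq_of_lt (by omega)]
      omega
  have ey : (y.val + n - a.val) % n = y.val + n - a.val ∨
      (n ≤ y.val + n - a.val ∧ (y.val + n - a.val) % n = y.val - a.val) := by
    rcases lt_or_ge (y.val + n - a.val) n with h' | h'
    · exact Or.inl (Nat.mod_eq_of_lt h')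
    · right; refine ⟨h', ?_⟩
      rw [Nat.mod_eq_sub_mod h', Nat.mod_eq_of_lt (by omega)]
      omega
  apply Fin.ext
  omega

/-- change of base for Cyc4 on Fin values -/
lemma cyc4_val_to_gg {n : ℕ} (c : Fin n) {w x y z : Fin n}
    (h : Cyc4 w.val x.val y.val z.val) :
    Cyc4 (gg c w) (gg c x) (gg c y) (gg c z) := by
  have key : ∀ u : Fin n, gg c u = (u.val + (n - c.val)) % n := by
    intro u; unfold gg; congr 1; omega
  rw [key w, key x, key y, key z]
  have hK : n - c.val ≤ n := by omega
  rcases h with h | h | h | h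
  · exact cyc4_shift hK h.1 h.2.1 h.2.2 z.isLt
  · exact cyc4_rot (cyc4_rot (cyc4_rot (cyc4_shift hK h.1 h.2.1 h.2.2 w.isLt)))
  · exact cyc4_rot (cyc4_rot (cyc4_shift hK h.1 h.2.1 h.2.2 x.isLt))
  · exact cyc4_rot (cyc4_shift hK h.1 h.2.1 h.2.2 y.isLt)

lemma cyc4_gg_to_val {n : ℕ} (c : Fin n) {w x y z : Fin n}
    (h : Cyc4 (gg c w) (gg c x) (gg c y) (gg c z)) :
    Cyc4 w.val x.val y.val z.val := by
  have key : ∀ u : Fin n, u.val = (gg c u + c.val) % n := by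
    intro u; unfold gg
    rw [Nat.mod_add_mod]
    have : u.val + n - c.val + c.val = u.val + n := by omega
    rw [this, Nat.add_mod_right, Nat.mod_eq_of_lt u.isLt]
  rw [key w, key x, key y, key z]
  have hK : c.val ≤ n := le_of_lt c.isLt
  rcases h with h | h | h | h
  · exact cyc4_shift hK h.1 h.2.1 h.2.2 (gg_lt c z)
  · exact cyc4_rot (cyc4_rot (cyc4_rot (cyc4_shift hK h.1 h.2.1 h.2.2 (gg_lt c w))))
  · exact cyc4_rot (cyc4_rot (cyc4_shift hK h.1 h.2.1 h.2.2 (gg_lt c x)))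
  · exact cyc4_rot (cyc4_shift hK h.1 h.2.1 h.2.2 (gg_lt c y))

/-- From a violated weak separation, extract a cyclically alternating quadruple. -/
lemma ws_viol {n : ℕ} {A B : Finset (Fin n)} (c : Fin n) (h : ¬ WeakSepSets A B) :
    ∃ w x y z : Fin n, w ∈ A \ B ∧ x ∈ B \ A ∧ y ∈ A \ B ∧ z ∈ B \ A ∧
      Cyc4 (gg c w) (gg c x) (gg c y) (gg c z) := by
  rw [WeakSepSets, not_not] at h
  obtain ⟨u, u', v, v', hu, hu', hv, hv', hpat⟩ := h
  rcases hpat with ⟨h1, h2, h3⟩ | ⟨h1, h2, h3⟩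
  · exact ⟨u, v, u', v', hu, hv, hu', hv',
      cyc4_val_to_gg c (Or.inl ⟨h1, h2, h3⟩)⟩
  · refine ⟨u, v', u', v, hu, hv', hu', hv, cyc4_val_to_gg c ?_⟩
    exact Or.inr (Or.inr (Or.inr ⟨h1, h2, h3⟩))

/-- Build a weak separation violation from a cyclically alternating quadruple. -/
lemma ws_build {n : ℕ} {A B : Finset (Fin n)} (c : Fin n) {w x y z : Fin n}
    (hw : w ∈ A \ B) (hx : x ∈ B \ A) (hy : y ∈ A \ B) (hz : z ∈ B \ A)
    (hcyc : Cyc4 (gg c w) (gg c x) (gg c y) (gg c z)) (hws : WeakSepSets A B) : False := by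
  have h := cyc4_gg_to_val c hcyc
  apply hws
  rcases h with h | h | h | h
  · exact ⟨w, y, x, z, hw, hy, hx, hz, Or.inl ⟨h.1, h.2.1, h.2.2⟩⟩
  · exact ⟨y, w, x, z, hy, hw, hx, hz, Or.inr ⟨h.1, h.2.1, h.2.2⟩⟩
  · exact ⟨y, w, z, x, hy, hw, hz, hx, Or.inl ⟨h.1, h.2.1, h.2.2⟩⟩
  · exact ⟨w, y, z, x, hw, hy, hz, hx, Or.inr ⟨h.1, h.2.1, h.2.2⟩⟩

/-! ## cyclic order from chain structure -/

lemma chain_cyc4_aux {n : ℕ} {l : List (Fin n)} (hc : ClockwiseCyclic l)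
    {i1 i2 i3 i4 : ℕ} (h12 : i1 < i2) (h23 : i2 < i3) (h34 : i3 < i4) (h4 : i4 < l.length)
    (c : Fin n) :
    Cyc4 (gg c (l[i1]'(by omega))) (gg c (l[i2]'(by omega)))
      (gg c (l[i3]'(by omega))) (gg c (l[i4]'(by omega))) := by
  obtain ⟨k0, hch⟩ := hc
  set len := l.length with hlendef
  have hlen0 : 0 < len := by omega
  have hrm : l.rotate (k0 % len) = l.rotate k0 := List.rotate_mod l k0
  rw [← hrm] at hch
  set k := k0 % len with hkdef
  have hk : k < len := Nat.mod_lt _ hlen0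
  have hp := List.pairwise_iff_getElem.mp (List.isChain_iff_pairwise.mp hch)
  have hlrot : (l.rotate k).length = len := List.length_rotate l k
  -- position in rotated list
  have hjlt : ∀ i, i < len → (i + (len - k)) % len < len := fun i _ => Nat.mod_lt _ hlen0
  have hrot : ∀ (i : ℕ) (h : i < len),
      (l.rotate k)[(i + (len - k)) % len]'(by rw [hlrot]; exact hjlt i h) = l[i]'h := by
    intro i h
    rw [List.getElem_rotate]
    congr 1
    rw [Nat.mod_add_mod]
    have h1 : i + (len - k) + k = i + len := by omega
    rw [h1, Nat.add_mod_right, Nat.mod_eq_of_lt h]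
  have hmono : ∀ (s t : ℕ) (hs : s < len) (ht : t < len),
      (s + (len - k)) % len < (t + (len - k)) % len → (l[s]'hs).val < (l[t]'ht).val := by
    intro s t hs ht hlt
    have := hp ((s + (len - k)) % len) ((t + (len - k)) % len)
      (by rw [hlrot]; exact hjlt s hs) (by rw [hlrot]; exact hjlt t ht) hlt
    rw [hrot s hs, hrot t ht] at this
    exact this
  have hj : ∀ i, i < len → (k ≤ i ∧ (i + (len - k)) % len = i - k) ∨
      (i < k ∧ (i + (len - k)) % len = i + (len - k)) := by
    intro i h
    rcases le_or_gt k i with h' | h'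
    · left
      refine ⟨h', ?_⟩
      have h1 : i + (len - k) = (i - k) + len := by omega
      rw [h1, Nat.add_mod_right, Nat.mod_eq_of_lt (by omega)]
    · right
      exact ⟨h', Nat.mod_eq_of_lt (by omega)⟩
  have hj1 := hj i1 (by omega); have hj2 := hj i2 (by omega)
  have hj3 := hj i3 (by omega); have hj4 := hj i4 h4
  set e1 := l[i1]'(by omega); set e2 := l[i2]'(by omega)
  set e3 := l[i3]'(by omega); set e4 := l[i4]'(by omega)
  have m12 := hmono i1 i2 (by omega) (by omega)
  have m13 := hmono i1 i3 (by omega) (by omega)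
  have m14 := hmono i1 i4 (by omega) h4
  have m23 := hmono i2 i3 (by omega) (by omega)
  have m24 := hmono i2 i4 (by omega) h4
  have m34 := hmono i3 i4 (by omega) h4
  have m21 := hmono i2 i1 (by omega) (by omega)
  have m31 := hmono i3 i1 (by omega) (by omega)
  have m41 := hmono i4 i1 h4 (by omega)
  have m32 := hmono i3 i2 (by omega) (by omega)
  have m42 := hmono i4 i2 h4 (by omega)
  have m43 := hmono i4 i3 h4 (by omega)
  apply cyc4_val_to_gg
  unfold Cyc4 gInc
  rcases hj1 with hj1 | hj1 <;> rcases hj2 with hj2 | hj2 <;>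
    rcases hj3 with hj3 | hj3 <;> rcases hj4 with hj4 | hj4 <;>
  · first
    | exact Or.inl ⟨m12 (by omega), m23 (by omega), m34 (by omega)⟩
    | exact Or.inr (Or.inl ⟨m23 (by omega), m34 (by omega), m41 (by omega)⟩)
    | exact Or.inr (Or.inr (Or.inl ⟨m34 (by omega), m41 (by omega), m12 (by omega)⟩))
    | exact Or.inr (Or.inr (Or.inr ⟨m41 (by omega), m12 (by omega), m23 (by omega)⟩))
    | omega

lemma chain_cyc4 {n : ℕ} {l : List (Fin n)} (hc : ClockwiseCyclic l)
    {i1 i2 i3 i4 : ℕ} (h12 : i1 < i2) (h23 : i2 < i3) (h34 : i3 < i4) (h4 : i4 < l.length)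
    (c : Fin n) {e1 e2 e3 e4 : Fin n}
    (he1 : l[i1]'(by omega) = e1) (he2 : l[i2]'(by omega) = e2)
    (he3 : l[i3]'(by omega) = e3) (he4 : l[i4]'(by omega) = e4) :
    Cyc4 (gg c e1) (gg c e2) (gg c e3) (gg c e4) := by
  subst he1 he2 he3 he4
  exact chain_cyc4_aux hc h12 h23 h34 h4 c

/-! ## zip helpers -/

lemma mem_zip_idx {α β : Type*} {l1 : List α} {l2 : List β} {p : α × β}
    (h : p ∈ l1.zip l2) :
    ∃ i, ∃ (h1 : i < l1.length) (h2 : i < l2.length), l1[i] = p.1 ∧ l2[i] = p.2 := by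
  obtain ⟨i, hi, hget⟩ := List.mem_iff_getElem.mp h
  have hl := List.length_zip (l₁ := l1) (l₂ := l2)
  refine ⟨i, by omega, by rw [hl] at hi; omega, ?_, ?_⟩ <;>
  · have := (List.getElem_zip (h := hi)).symm.trans hget
    simp only [Prod.ext_iff] at this
    tauto

lemma idx_mem_zip {α β : Type*} {l1 : List α} {l2 : List β} {i : ℕ}
    (h1 : i < l1.length) (h2 : i < l2.length) : (l1[i], l2[i]) ∈ l1.zip l2 := by
  have hi : i < (l1.zip l2).length := by rw [List.length_zip]; omega
  have := List.getElem_zip (h := hi)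
  rw [← this]
  exact List.getElem_mem hi

lemma fst_mem_zip {α β : Type*} {l1 : List α} {l2 : List β} {x : α}
    (hlen : l1.length = l2.length) (h : x ∈ l1) : ∃ y, (x, y) ∈ l1.zip l2 := by
  obtain ⟨i, hi, hget⟩ := List.mem_iff_getElem.mp h
  refine ⟨l2[i]'(by omega), ?_⟩
  rw [← hget]
  exact idx_mem_zip hi (by omega)

lemma snd_mem_zip {α β : Type*} {l1 : List α} {l2 : List β} {y : β}
    (hlen : l1.length = l2.length) (h : y ∈ l2) : ∃ x, (x, y) ∈ l1.zip l2 := by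
  obtain ⟨i, hi, hget⟩ := List.mem_iff_getElem.mp h
  refine ⟨l1[i]'(by omega), ?_⟩
  rw [← hget]
  exact idx_mem_zip (by omega) hi

lemma zip_unique_fst {α β : Type*} {l1 : List α} {l2 : List β} {x : α} {y y' : β}
    (hnd : l1.Nodup) (h : (x, y) ∈ l1.zip l2) (h' : (x, y') ∈ l1.zip l2) : y = y' := by
  obtain ⟨i, hi1, hi2, hx, hy⟩ := mem_zip_idx h
  obtain ⟨j, hj1, hj2, hx', hy'⟩ := mem_zip_idx h'
  have hij : i = j := (hnd.getElem_inj_iff).mp (hx.trans hx'.symm)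
  subst hij
  exact hy.symm.trans hy'

lemma zip_unique_snd {α β : Type*} {l1 : List α} {l2 : List β} {x x' : α} {y : β}
    (hnd : l2.Nodup) (h : (x, y) ∈ l1.zip l2) (h' : (x', y) ∈ l1.zip l2) : x = x' := by
  obtain ⟨i, hi1, hi2, hx, hy⟩ := mem_zip_idx h
  obtain ⟨j, hj1, hj2, hx', hy'⟩ := mem_zip_idx h'
  have hij : i = j := (hnd.getElem_inj_iff).mp (hy.trans hy'.symm)
  subst hij
  exact hx.symm.trans hx'

lemma zip_swap_mem {α β : Type*} {l1 : List α} {l2 : List β} {x : α} {y : β}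
    (h : (x, y) ∈ l1.zip l2) : (y, x) ∈ l2.zip l1 := by
  obtain ⟨i, hi1, hi2, hx, hy⟩ := mem_zip_idx h
  have := idx_mem_zip hi2 hi1
  rw [hx, hy] at this
  exact this

/-- cyclic order of two connections of a circular pair -/
lemma edgeCyc {n : ℕ} {P Q : List (Fin n)} (hlen : P.length = Q.length)
    (hcyc : ClockwiseCyclic (P ++ Q.reverse)) (c : Fin n)
    {p q p' q' : Fin n} (h1 : (p, q) ∈ P.zip Q) (h2 : (p', q') ∈ P.zip Q) (hne : p ≠ p') :
    Cyc4 (gg c p) (gg c p') (gg c q') (gg c q) ∨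
      Cyc4 (gg c p') (gg c p) (gg c q) (gg c q') := by
  have hLlen : (P ++ Q.reverse).length = P.length + P.length := by
    rw [List.length_append, List.length_reverse, ← hlen]
  have key : ∀ (i i' : ℕ) (hi : i < P.length) (hi' : i' < P.length), i < i' →
      ∀ (p₁ q₁ p₂ q₂ : Fin n), P[i] = p₁ → Q[i]'(by omega) = q₁ → P[i'] = p₂ →
      Q[i']'(by omega) = q₂ →
      Cyc4 (gg c p₁) (gg c p₂) (gg c q₂) (gg c q₁) := by
    intro i i' hi hi' hii p₁ q₁ p₂ q₂ hp1 hq1 hp2 hq2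
    refine chain_cyc4 hcyc (i1 := i) (i2 := i') (i3 := P.length + (P.length - 1 - i'))
      (i4 := P.length + (P.length - 1 - i)) hii (by omega) (by omega) (by omega) c
      ?_ ?_ ?_ ?_
    · rw [List.getElem_append_left hi]; exact hp1
    · rw [List.getElem_append_left hi']; exact hp2
    · rw [List.getElem_append_right (by omega : P.length ≤ P.length + (P.length - 1 - i'))]
      rw [List.getElem_reverse]
      rw [← hq2]
      congr 1
      omega
    · rw [List.getElem_append_right (by omega : P.length ≤ P.length + (P.length - 1 - i))]
      rw [List.getElem_reverse]
      rw [← hq1]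
      congr 1
      omega
  obtain ⟨i, hi1, hi2, hp, hq⟩ := mem_zip_idx h1
  obtain ⟨i', hi1', hi2', hp', hq'⟩ := mem_zip_idx h2
  have hii : i ≠ i' := by
    intro h
    subst h
    exact hne (hp.symm.trans hp')
  rcases lt_or_gt_of_ne hii with h | h
  · exact Or.inl (key i i' hi1 hi1' h p q p' q' hp hq hp' hq')
  · exact Or.inr (key i' i hi1' hi1 h p' q' p q hp' hq' hp hq)

/-! ## the main removal lemma -/

lemma main_removal {n : ℕ} {a b : Fin n} {P Q R S : List (Fin n)}
    (hlPQ : P.length = Q.length) (hlRS : R.length = S.length)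
    (hndP : P.Nodup) (hndQ : Q.Nodup) (hndR : R.Nodup) (hndS : S.Nodup)
    (hdPQ : ∀ x ∈ P, x ∉ Q) (hdRS : ∀ x ∈ R, x ∉ S)
    (hmPQ : ∀ p q p' q' : Fin n, (p, q) ∈ P.zip Q → (p', q') ∈ P.zip Q → p ≠ p' →
      Cyc4 (gg a p) (gg a p') (gg a q') (gg a q) ∨
        Cyc4 (gg a p') (gg a p) (gg a q) (gg a q'))
    (hmRS : ∀ p q p' q' : Fin n, (p, q) ∈ R.zip S → (p', q') ∈ R.zip S → p ≠ p' →
      Cyc4 (gg a p) (gg a p') (gg a q') (gg a q) ∨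
        Cyc4 (gg a p') (gg a p) (gg a q) (gg a q'))
    (harcPQ : ∀ p q : Fin n, (p, q) ∈ P.zip Q → Sym2.mk p q ≠ Sym2.mk a b →
      gg a b < gg a p ∨ gg a b < gg a q)
    (harcRS : ∀ p q : Fin n, (p, q) ∈ R.zip S → gg a b < gg a p ∨ gg a b < gg a q)
    (hab : (a, b) ∈ P.zip Q)
    (hws : WeakSepSets (P.toFinset ∪ R.toFinset) (Q.toFinset ∪ S.toFinset)) :
    WeakSepSets ((P.toFinset.erase a) ∪ R.toFinset)
      ((Q.toFinset.erase b) ∪ S.toFinset) := by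
  have haP : a ∈ P := (List.of_mem_zip hab).1
  have hbQ : b ∈ Q := (List.of_mem_zip hab).2
  have haQ : a ∉ Q := hdPQ a haP
  have hbP : b ∉ P := fun h => hdPQ b h hbQ
  have hga : gg a a = 0 := gg_self a
  -- bound for P-side vertices
  have hPF1 : ∀ p q : Fin n, (p, q) ∈ P.zip Q → p ≠ a →
      gg a b < gg a q ∧ gg a q < gg a p := by
    intro p q hpq hpa
    have hSne : Sym2.mk p q ≠ Sym2.mk a b := by
      intro h
      rcases Sym2.eq_iff.mp h with ⟨h1, h2⟩ | ⟨h1, h2⟩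
      · exact hpa h1
      · exact hbP (h1 ▸ (List.of_mem_zip hpq).1)
    have harc' := harcPQ p q hpq hSne
    have hmm := hmPQ a b p q hab hpq (fun h => hpa h.symm)
    rcases hmm with h | h <;> rcases harc' with h' | h' <;>
      (unfold Cyc4 gInc at h; omega)
  have hPa : ∀ p ∈ P, p ≠ a → gg a b < gg a p := by
    intro p hp hpa
    obtain ⟨q, hq⟩ := fst_mem_zip hlPQ hp
    have := hPF1 p q hq hpa
    omega
  have hQb : ∀ q ∈ Q, q ≠ b → gg a b < gg a q := by
    intro q hq hqb
    obtain ⟨p, hpq⟩ := snd_mem_zip hlPQ hq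
    have hpa : p ≠ a := by
      intro h
      exact hqb (zip_unique_fst hndP (h ▸ hpq) hab)
    exact (hPF1 p q hpq hpa).1
  -- if b ∈ R, all of S is strictly outside the arc
  have hbR_S : b ∈ R → ∀ s ∈ S, gg a b < gg a s := by
    intro hbR s hs
    obtain ⟨z0, hbz⟩ := fst_mem_zip hlRS hbR
    obtain ⟨r0, hrs⟩ := snd_mem_zip hlRS hs
    by_cases hz0s : z0 = s
    · rcases harcRS b s (hz0s ▸ hbz) with h | h
      · omega
      · exact h
    · have hr0b : r0 ≠ b := by
        intro h
        exact hz0s (zip_unique_fst hndR (h ▸ hrs) hbz).symm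
      by_contra hcon'
      push_neg at hcon'
      have h1 : gg a b < gg a z0 := by
        rcases harcRS b z0 hbz with h | h
        · omega
        · exact h
      have h2 : gg a b < gg a r0 := by
        rcases harcRS r0 s hrs with h | h
        · exact h
        · omega
      have hmm := hmRS b z0 r0 s hbz hrs (fun h => hr0b h.symm)
      rcases hmm with h | h <;> (unfold Cyc4 gInc at h; omega)
  -- if a ∈ S, all of R is strictly outside the arc
  have haS_R : a ∈ S → ∀ r ∈ R, gg a b < gg a r := by
    intro haS r hr
    obtain ⟨wa, hwa⟩ := snd_mem_zip hlRS haS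
    obtain ⟨yr, hyr⟩ := fst_mem_zip hlRS hr
    by_cases hwar : wa = r
    · rcases harcRS r a (hwar ▸ hwa) with h | h
      · exact h
      · omega
    · have hyra : yr ≠ a := by
        intro h
        exact hwar (zip_unique_snd hndS hwa (h ▸ hyr))
      by_contra hcon'
      push_neg at hcon'
      have h1 : gg a b < gg a wa := by
        rcases harcRS wa a hwa with h | h
        · exact h
        · omega
      have h2 : gg a b < gg a yr := by
        rcases harcRS r yr hyr with h | h
        · omega
        · exact h
      have hmm := hmRS wa a r yr hwa hyr hwar
      rcases hmm with h | h <;> (unfold Cyc4 gInc at h; omega)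
  by_contra hcon
  obtain ⟨w, x, y, z, hw, hx, hy, hz, hcyc⟩ := ws_viol a hcon
  have hd := cyc4_distinct hcyc
  -- classification of witnesses
  have hUclass : ∀ u : Fin n, u ∈ (P.toFinset.erase a ∪ R.toFinset) \
      (Q.toFinset.erase b ∪ S.toFinset) →
      (u ∈ P.toFinset ∪ R.toFinset ∧ u ∉ Q.toFinset ∪ S.toFinset) ∨ (u = b ∧ b ∈ R) := by
    intro u hu
    obtain ⟨h1, h2⟩ := Finset.mem_sdiff.mp hu
    simp only [Finset.mem_union, Finset.mem_erase, List.mem_toFinset, not_or, not_and] at h1 h2 ⊢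
    obtain ⟨h2a, h2b⟩ := h2
    by_cases huQ : u ∈ Q
    · right
      have hub : u = b := by
        by_contra hub
        exact (h2a hub) huQ
      refine ⟨hub, ?_⟩
      rcases h1 with ⟨-, h⟩ | h
      · exact absurd h (hub ▸ hbP)
      · exact hub ▸ h
    · left
      constructor
      · rcases h1 with ⟨-, h⟩ | h
        · exact Or.inl h
        · exact Or.inr h
      · exact ⟨huQ, h2b⟩
  have hVclass : ∀ v : Fin n, v ∈ (Q.toFinset.erase b ∪ S.toFinset) \
      (P.toFinset.erase a ∪ R.toFinset) →
      (v ∈ Q.toFinset ∪ S.toFinset ∧ v ∉ P.toFinset ∪ R.toFinset) ∨ (v = a ∧ a ∈ S) := by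
    intro v hv
    obtain ⟨h1, h2⟩ := Finset.mem_sdiff.mp hv
    simp only [Finset.mem_union, Finset.mem_erase, List.mem_toFinset, not_or, not_and] at h1 h2 ⊢
    obtain ⟨h2a, h2b⟩ := h2
    by_cases hvP : v ∈ P
    · right
      have hva : v = a := by
        by_contra hva
        exact (h2a hva) hvP
      refine ⟨hva, ?_⟩
      rcases h1 with ⟨-, h⟩ | h
      · exact absurd h (hva ▸ haQ)
      · exact hva ▸ h
    · left
      constructor
      · rcases h1 with ⟨-, h⟩ | h
        · exact Or.inl h
        · exact Or.inr h
      · exact ⟨hvP, h2b⟩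
  -- case: some V-witness is the new element a
  have caseA : ∀ w' y' z' : Fin n,
      (w' ∈ P.toFinset ∪ R.toFinset ∧ w' ∉ Q.toFinset ∪ S.toFinset) →
      (y' ∈ P.toFinset ∪ R.toFinset ∧ y' ∉ Q.toFinset ∪ S.toFinset) →
      (z' ∈ Q.toFinset ∪ S.toFinset ∧ z' ∉ P.toFinset ∪ R.toFinset) →
      a ∈ S →
      Cyc4 (gg a w') (gg a a) (gg a y') (gg a z') → False := by
    intro w' y' z' hw' hy' hz' haS hcy
    have hbR : b ∉ R := fun h => absurd (haS_R haS b h) (by omega)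
    have hbound : ∀ u' : Fin n, (u' ∈ P.toFinset ∪ R.toFinset ∧
        u' ∉ Q.toFinset ∪ S.toFinset) → gg a b < gg a u' := by
      intro u' hu'
      rcases Finset.mem_union.mp hu'.1 with h | h
      · refine hPa u' (List.mem_toFinset.mp h) ?_
        intro he
        exact hu'.2 (Finset.mem_union_right _ (List.mem_toFinset.mpr (he ▸ haS)))
      · exact haS_R haS u' (List.mem_toFinset.mp h)
    have hgw := hbound w' hw'
    have hgy := hbound y' hy'
    have hord : gg a y' < gg a z' ∧ gg a z' < gg a w' := by
      unfold Cyc4 gInc at hcy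
      omega
    refine ws_build a (A := P.toFinset ∪ R.toFinset) (B := Q.toFinset ∪ S.toFinset)
      (w := y') (x := z') (y := w') (z := b) ?_ ?_ ?_ ?_ ?_ hws
    · exact Finset.mem_sdiff.mpr ⟨hy'.1, hy'.2⟩
    · exact Finset.mem_sdiff.mpr ⟨hz'.1, hz'.2⟩
    · exact Finset.mem_sdiff.mpr ⟨hw'.1, hw'.2⟩
    · refine Finset.mem_sdiff.mpr ⟨Finset.mem_union_left _ (List.mem_toFinset.mpr hbQ), ?_⟩
      intro hmem
      rcases Finset.mem_union.mp hmem with h | h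
      · exact hbP (List.mem_toFinset.mp h)
      · exact hbR (List.mem_toFinset.mp h)
    · exact Or.inr (Or.inr (Or.inr ⟨hgy, hord.1, hord.2⟩))
  -- case: some U-witness is the new element b
  have caseB : ∀ x' y' z' : Fin n,
      (x' ∈ Q.toFinset ∪ S.toFinset ∧ x' ∉ P.toFinset ∪ R.toFinset) →
      (y' ∈ P.toFinset ∪ R.toFinset ∧ y' ∉ Q.toFinset ∪ S.toFinset) →
      (z' ∈ Q.toFinset ∪ S.toFinset ∧ z' ∉ P.toFinset ∪ R.toFinset) →
      b ∈ R →
      Cyc4 (gg a b) (gg a x') (gg a y') (gg a z') → False := by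
    intro x' y' z' hx' hy' hz' hbR hcy
    have haS : a ∉ S := fun h => absurd (hbR_S hbR a h) (by omega)
    have hd' := cyc4_distinct hcy
    have hbound : ∀ v' : Fin n, gg a b ≠ gg a v' → (v' ∈ Q.toFinset ∪ S.toFinset ∧
        v' ∉ P.toFinset ∪ R.toFinset) → gg a b < gg a v' := by
      intro v' hne hv'
      rcases Finset.mem_union.mp hv'.1 with h | h
      · refine hQb v' (List.mem_toFinset.mp h) ?_
        intro he
        exact hne (by rw [he])
      · exact hbR_S hbR v' (List.mem_toFinset.mp h)
    have hgx := hbound x' hd'.1 hx'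
    have hgz := hbound z' hd'.2.2.1 hz'
    have hord : gg a x' < gg a y' ∧ gg a y' < gg a z' := by
      unfold Cyc4 gInc at hcy
      omega
    refine ws_build a (A := P.toFinset ∪ R.toFinset) (B := Q.toFinset ∪ S.toFinset)
      (w := y') (x := z') (y := a) (z := x') ?_ ?_ ?_ ?_ ?_ hws
    · exact Finset.mem_sdiff.mpr ⟨hy'.1, hy'.2⟩
    · exact Finset.mem_sdiff.mpr ⟨hz'.1, hz'.2⟩
    · refine Finset.mem_sdiff.mpr ⟨Finset.mem_union_left _ (List.mem_toFinset.mpr haP), ?_⟩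
      intro hmem
      rcases Finset.mem_union.mp hmem with h | h
      · exact haQ (List.mem_toFinset.mp h)
      · exact haS (List.mem_toFinset.mp h)
    · exact Finset.mem_sdiff.mpr ⟨hx'.1, hx'.2⟩
    · refine Or.inr (Or.inr (Or.inl ⟨?_, hord.1, hord.2⟩))
      omega
  -- dispatch
  have hwc := hUclass w hw
  have hyc := hUclass y hy
  have hxc := hVclass x hx
  have hzc := hVclass z hz
  rcases hxc with hxo | ⟨rfl, haS⟩
  · rcases hzc with hzo | ⟨rfl, haS⟩
    · rcases hwc with hwo | ⟨rfl, hbR⟩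
      · rcases hyc with hyo | ⟨rfl, hbR⟩
        · exact ws_build a (Finset.mem_sdiff.mpr hwo) (Finset.mem_sdiff.mpr hxo)
            (Finset.mem_sdiff.mpr hyo) (Finset.mem_sdiff.mpr hzo) hcyc hws
        · exact caseB z w x hzo hwo hxo hbR (cyc4_rot (cyc4_rot hcyc))
      · have hyo : y ∈ P.toFinset ∪ R.toFinset ∧ y ∉ Q.toFinset ∪ S.toFinset := by
          rcases hyc with hyo | ⟨rfl, -⟩
          · exact hyo
          · exact absurd rfl hd.2.1
        exact caseB x y z hxo hyo hzo hbR hcyc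
    · have hbR : b ∉ R := fun h => absurd (haS_R haS b h) (by omega)
      have hwo : w ∈ P.toFinset ∪ R.toFinset ∧ w ∉ Q.toFinset ∪ S.toFinset := by
        rcases hwc with hwo | ⟨rfl, hbR'⟩
        · exact hwo
        · exact absurd hbR' hbR
      have hyo : y ∈ P.toFinset ∪ R.toFinset ∧ y ∉ Q.toFinset ∪ S.toFinset := by
        rcases hyc with hyo | ⟨rfl, hbR'⟩
        · exact hyo
        · exact absurd hbR' hbR
      exact caseA y w x hyo hwo hxo haS (cyc4_rot (cyc4_rot hcyc))
  · have hbR : b ∉ R := fun h => absurd (haS_R haS b h) (by omega)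
    have hwo : w ∈ P.toFinset ∪ R.toFinset ∧ w ∉ Q.toFinset ∪ S.toFinset := by
      rcases hwc with hwo | ⟨rfl, hbR'⟩
      · exact hwo
      · exact absurd hbR' hbR
    have hyo : y ∈ P.toFinset ∪ R.toFinset ∧ y ∉ Q.toFinset ∪ S.toFinset := by
      rcases hyc with hyo | ⟨rfl, hbR'⟩
      · exact hyo
      · exact absurd hbR' hbR
    have hzo : z ∈ Q.toFinset ∪ S.toFinset ∧ z ∉ P.toFinset ∪ R.toFinset := by
      rcases hzc with hzo | ⟨rfl, -⟩
      · exact hzo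
      · exact absurd rfl hd.2.2.2.2.1
  -- x = a = z impossible
    exact caseA w y z hwo hyo hzo haS hcyc

/-! ## computing `Jop` -/

lemma jop_none {n : ℕ} {a b : Fin n} {pq : PrePair n}
    (hlen : pq.1.length = pq.2.length)
    (h : ∀ pr ∈ pq.1.zip pq.2, Sym2.mk pr.1 pr.2 ≠ Sym2.mk a b) : Jop a b pq = pq := by
  have hall : ∀ pr ∈ pq.1.zip pq.2, (decide (Sym2.mk pr.1 pr.2 ≠ Sym2.mk a b)) = true := by
    intro pr hpr
    simp only [decide_eq_true_eq]
    exact h pr hpr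
  rw [Jop, List.filter_eq_self.mpr hall, List.map_fst_zip (le_of_eq hlen),
    List.map_snd_zip (ge_of_eq hlen)]

lemma jop_erase {n : ℕ} {a b : Fin n} {pq : PrePair n}
    (hlen : pq.1.length = pq.2.length) (hndP : pq.1.Nodup) (hndQ : pq.2.Nodup)
    (hdisj : ∀ x ∈ pq.1, x ∉ pq.2) {c d : Fin n}
    (hcd : (c, d) ∈ pq.1.zip pq.2) (hS : Sym2.mk c d = Sym2.mk a b) :
    (Jop a b pq).1.toFinset = pq.1.toFinset.erase c ∧
      (Jop a b pq).2.toFinset = pq.2.toFinset.erase d := by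
  constructor
  · ext x
    simp only [Jop, List.mem_toFinset, List.mem_map, List.mem_filter, decide_eq_true_eq,
      Finset.mem_erase, List.mem_toFinset]
    constructor
    · rintro ⟨⟨x0, q0⟩, ⟨hz, hne⟩, rfl⟩
      refine ⟨?_, (List.of_mem_zip hz).1⟩
      intro he
      subst he
      have : q0 = d := zip_unique_fst hndP hz hcd
      subst this
      exact hne hS
    · rintro ⟨hxc, hxP⟩
      obtain ⟨q0, hq0⟩ := fst_mem_zip hlen hxP
      refine ⟨(x, q0), ⟨hq0, ?_⟩, rfl⟩
      rw [← hS]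
      intro hSx
      rcases Sym2.eq_iff.mp hSx with ⟨h1, h2⟩ | ⟨h1, h2⟩
      · exact hxc h1
      · exact hdisj x hxP ((show x = d from h1) ▸ (List.of_mem_zip hcd).2)
  · ext x
    simp only [Jop, List.mem_toFinset, List.mem_map, List.mem_filter, decide_eq_true_eq,
      Finset.mem_erase, List.mem_toFinset]
    constructor
    · rintro ⟨⟨p0, x0⟩, ⟨hz, hne⟩, rfl⟩
      refine ⟨?_, (List.of_mem_zip hz).2⟩
      intro he
      subst he
      have : p0 = c := zip_unique_snd hndQ hz hcd
      subst this
      exact hne hS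
    · rintro ⟨hxd, hxQ⟩
      obtain ⟨p0, hp0⟩ := snd_mem_zip hlen hxQ
      refine ⟨(p0, x), ⟨hp0, ?_⟩, rfl⟩
      rw [← hS]
      intro hSx
      rcases Sym2.eq_iff.mp hSx with ⟨h1, h2⟩ | ⟨h1, h2⟩
      · exact hxd h2
      · exact hdisj c (List.of_mem_zip hcd).1 (h2 ▸ hxQ)

/-! ## weak separation basics -/

lemma ws_symm {n : ℕ} {A B : Finset (Fin n)} (h : WeakSepSets A B) : WeakSepSets B A := by
  rintro ⟨u, u', v, v', h1, h2, h3, h4, h5⟩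
  exact h ⟨v, v', u, u', h3, h4, h1, h2, h5.symm⟩

lemma ws_mono2 {n : ℕ} {A B A' B' : Finset (Fin n)} {a b : Fin n}
    (hA : ∀ x, x ∈ A' ↔ x ∈ A ∧ x ≠ a ∧ x ≠ b)
    (hB : ∀ x, x ∈ B' ↔ x ∈ B ∧ x ≠ a ∧ x ≠ b)
    (h : WeakSepSets A B) : WeakSepSets A' B' := by
  have key1 : ∀ t, t ∈ A' \ B' → t ∈ A \ B := by
    intro t ht
    obtain ⟨ht1, ht2⟩ := Finset.mem_sdiff.mp ht
    obtain ⟨htA, hta, htb⟩ := (hA t).mp ht1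
    exact Finset.mem_sdiff.mpr ⟨htA, fun hBm => ht2 ((hB t).mpr ⟨hBm, hta, htb⟩)⟩
  have key2 : ∀ t, t ∈ B' \ A' → t ∈ B \ A := by
    intro t ht
    obtain ⟨ht1, ht2⟩ := Finset.mem_sdiff.mp ht
    obtain ⟨htB, hta, htb⟩ := (hB t).mp ht1
    exact Finset.mem_sdiff.mpr ⟨htB, fun hAm => ht2 ((hA t).mpr ⟨hAm, hta, htb⟩)⟩
  rintro ⟨u, u', v, v', h1, h2, h3, h4, h5⟩
  exact h ⟨u, u', v, v', key1 _ h1, key1 _ h2, key2 _ h3, key2 _ h4, h5⟩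

lemma mem_erase_union_iff {n : ℕ} {X1 X2 : Finset (Fin n)} {c1 c2 a b : Fin n}
    (h1 : c1 = a ∨ c1 = b) (h2 : c2 = a ∨ c2 = b)
    (ha : a ∉ X1.erase c1 ∪ X2.erase c2) (hb : b ∉ X1.erase c1 ∪ X2.erase c2) (x : Fin n) :
    x ∈ X1.erase c1 ∪ X2.erase c2 ↔ x ∈ X1 ∪ X2 ∧ x ≠ a ∧ x ≠ b := by
  constructor
  · intro hx
    refine ⟨Finset.union_subset_union (Finset.erase_subset _ _)
      (Finset.erase_subset _ _) hx, ?_, ?_⟩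
    · rintro rfl; exact ha hx
    · rintro rfl; exact hb hx
  · rintro ⟨hx, hxa, hxb⟩
    rcases Finset.mem_union.mp hx with h | h
    · refine Finset.mem_union_left _ (Finset.mem_erase.mpr ⟨?_, h⟩)
      rcases h1 with rfl | rfl
      exacts [hxa, hxb]
    · refine Finset.mem_union_right _ (Finset.mem_erase.mpr ⟨?_, h⟩)
      rcases h2 with rfl | rfl
      exacts [hxa, hxb]

lemma both_typed_ws {n : ℕ} {a b : Fin n} {P Q R S : List (Fin n)} {cP cQ cR cS : Fin n}
    (hdPQ : ∀ x ∈ P, x ∉ Q) (hdRS : ∀ x ∈ R, x ∉ S)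
    (hP : cP ∈ P) (hQ : cQ ∈ Q) (hR : cR ∈ R) (hS : cS ∈ S)
    (hpq : cP = a ∧ cQ = b ∨ cP = b ∧ cQ = a)
    (hrs : cR = a ∧ cS = b ∨ cR = b ∧ cS = a)
    (hws1 : WeakSepSets (P.toFinset ∪ R.toFinset) (Q.toFinset ∪ S.toFinset)) :
    WeakSepSets (P.toFinset.erase cP ∪ R.toFinset.erase cR)
      (Q.toFinset.erase cQ ∪ S.toFinset.erase cS) := by
  have hPQ' : ∀ x ∈ Q, x ∉ P := fun x hx hx' => hdPQ x hx' hx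
  have hRS' : ∀ x ∈ S, x ∉ R := fun x hx hx' => hdRS x hx' hx
  have hnm : ∀ t : Fin n, t ∉ P → t ∉ R →
      t ∉ P.toFinset.erase cP ∪ R.toFinset.erase cR := by
    intro t h1 h2 hmem
    rcases Finset.mem_union.mp hmem with h | h
    · exact h1 (List.mem_toFinset.mp (Finset.mem_of_mem_erase h))
    · exact h2 (List.mem_toFinset.mp (Finset.mem_of_mem_erase h))
  have hnm' : ∀ t : Fin n, t ∉ Q → t ∉ S →
      t ∉ Q.toFinset.erase cQ ∪ S.toFinset.erase cS := by
    intro t h1 h2 hmem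
    rcases Finset.mem_union.mp hmem with h | h
    · exact h1 (List.mem_toFinset.mp (Finset.mem_of_mem_erase h))
    · exact h2 (List.mem_toFinset.mp (Finset.mem_of_mem_erase h))
  have herase : ∀ (t : Fin n) (X1 X2 : Finset (Fin n)), t ∉ X2.erase cR →
      t ∉ X1.erase t ∪ X2.erase cR := by
    intro t X1 X2 h hmem
    rcases Finset.mem_union.mp hmem with h' | h'
    · exact Finset.notMem_erase t X1 h'
    · exact h h'
  apply ws_mono2 (a := a) (b := b) ?_ ?_ hws1
  · intro x
    refine mem_erase_union_iff ?_ ?_ ?_ ?_ x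
    · tauto
    · tauto
    · -- a ∉ A'
      rcases hpq with ⟨rfl, rfl⟩ | ⟨rfl, rfl⟩ <;> rcases hrs with ⟨rfl, rfl⟩ | ⟨rfl, rfl⟩ <;>
        intro hmem <;> rcases Finset.mem_union.mp hmem with h | h <;>
        first
          | exact Finset.notMem_erase _ _ h
          | exact hPQ' _ hQ (List.mem_toFinset.mp (Finset.mem_of_mem_erase h))
          | exact hRS' _ hS (List.mem_toFinset.mp (Finset.mem_of_mem_erase h))
    · rcases hpq with ⟨rfl, rfl⟩ | ⟨rfl, rfl⟩ <;> rcases hrs with ⟨rfl, rfl⟩ | ⟨rfl, rfl⟩ <;>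
        intro hmem <;> rcases Finset.mem_union.mp hmem with h | h <;>
        first
          | exact Finset.notMem_erase _ _ h
          | exact hPQ' _ hQ (List.mem_toFinset.mp (Finset.mem_of_mem_erase h))
          | exact hRS' _ hS (List.mem_toFinset.mp (Finset.mem_of_mem_erase h))
  · intro x
    refine mem_erase_union_iff ?_ ?_ ?_ ?_ x
    · tauto
    · tauto
    · rcases hpq with ⟨rfl, rfl⟩ | ⟨rfl, rfl⟩ <;> rcases hrs with ⟨rfl, rfl⟩ | ⟨rfl, rfl⟩ <;>
        intro hmem <;> rcases Finset.mem_union.mp hmem with h | h <;>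
        first
          | exact Finset.notMem_erase _ _ h
          | exact hdPQ _ hP (List.mem_toFinset.mp (Finset.mem_of_mem_erase h))
          | exact hdRS _ hR (List.mem_toFinset.mp (Finset.mem_of_mem_erase h))
    · rcases hpq with ⟨rfl, rfl⟩ | ⟨rfl, rfl⟩ <;> rcases hrs with ⟨rfl, rfl⟩ | ⟨rfl, rfl⟩ <;>
        intro hmem <;> rcases Finset.mem_union.mp hmem with h | h <;>
        first
          | exact Finset.notMem_erase _ _ h
          | exact hdPQ _ hP (List.mem_toFinset.mp (Finset.mem_of_mem_erase h))
          | exact hdRS _ hR (List.mem_toFinset.mp (Finset.mem_of_mem_erase h))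

lemma match_swap {n : ℕ} {a : Fin n} {R S : List (Fin n)} (hndR : R.Nodup)
    (hm : ∀ p q p' q' : Fin n, (p, q) ∈ R.zip S → (p', q') ∈ R.zip S → p ≠ p' →
      Cyc4 (gg a p) (gg a p') (gg a q') (gg a q) ∨
        Cyc4 (gg a p') (gg a p) (gg a q) (gg a q')) :
    ∀ p q p' q' : Fin n, (p, q) ∈ S.zip R → (p', q') ∈ S.zip R → p ≠ p' →
      Cyc4 (gg a p) (gg a p') (gg a q') (gg a q) ∨
        Cyc4 (gg a p') (gg a p) (gg a q) (gg a q') := by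
  intro s r s' r' h1 h2 hne
  have h1' := zip_swap_mem h1
  have h2' := zip_swap_mem h2
  have hrr : r ≠ r' := by
    intro h
    exact hne (zip_unique_fst hndR (h ▸ h1') h2')
  rcases hm r s r' s' h1' h2' hrr with h | h
  · exact Or.inr (cyc4_rot (cyc4_rot h))
  · exact Or.inl (cyc4_rot (cyc4_rot h))

/-- the one-typed-pair case: both weak separation conditions survive removal. -/
lemma onesided {n : ℕ} {a b : Fin n} {P Q R S : List (Fin n)}
    (hlPQ : P.length = Q.length) (hlRS : R.length = S.length)
    (hndP : P.Nodup) (hndQ : Q.Nodup) (hndR : R.Nodup) (hndS : S.Nodup)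
    (hdPQ : ∀ x ∈ P, x ∉ Q) (hdRS : ∀ x ∈ R, x ∉ S)
    (hmPQ : ∀ p q p' q' : Fin n, (p, q) ∈ P.zip Q → (p', q') ∈ P.zip Q → p ≠ p' →
      Cyc4 (gg a p) (gg a p') (gg a q') (gg a q) ∨
        Cyc4 (gg a p') (gg a p) (gg a q) (gg a q'))
    (hmRS : ∀ p q p' q' : Fin n, (p, q) ∈ R.zip S → (p', q') ∈ R.zip S → p ≠ p' →
      Cyc4 (gg a p) (gg a p') (gg a q') (gg a q) ∨
        Cyc4 (gg a p') (gg a p) (gg a q) (gg a q'))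
    (harcPQ : ∀ p q : Fin n, (p, q) ∈ P.zip Q → Sym2.mk p q ≠ Sym2.mk a b →
      gg a b < gg a p ∨ gg a b < gg a q)
    (harcRS : ∀ p q : Fin n, (p, q) ∈ R.zip S → gg a b < gg a p ∨ gg a b < gg a q)
    (hab : (a, b) ∈ P.zip Q)
    (hws1 : WeakSepSets (P.toFinset ∪ R.toFinset) (Q.toFinset ∪ S.toFinset))
    (hws2 : WeakSepSets (P.toFinset ∪ S.toFinset) (Q.toFinset ∪ R.toFinset)) :
    WeakSepSets ((P.toFinset.erase a) ∪ R.toFinset) ((Q.toFinset.erase b) ∪ S.toFinset) ∧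
      WeakSepSets ((P.toFinset.erase a) ∪ S.toFinset)
        ((Q.toFinset.erase b) ∪ R.toFinset) := by
  constructor
  · exact main_removal hlPQ hlRS hndP hndQ hndR hndS hdPQ hdRS hmPQ hmRS harcPQ harcRS
      hab hws1
  · refine main_removal hlPQ hlRS.symm hndP hndQ hndS hndR hdPQ
      (fun x hx hx' => hdRS x hx' hx) hmPQ (match_swap hndR hmRS) harcPQ
      (fun p q h => (harcRS q p (zip_swap_mem h)).symm) hab hws2

/-! ## Solid and diametric circular pairs -/

theorem statement_17 (n : ℕ) (C : Set (PrePair n))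
    (hC : ∀ pq ∈ C, IsCircularPair pq ∧ pq.1 ≠ [])
    (hws : C.Pairwise WeakSepCP) (a b : Fin n)
    (hab : Sym2.mk a b ∈ ⋃ pq ∈ C, (connFinset pq : Set (Sym2 (Fin n))))
    (harc : ∀ e ∈ ⋃ pq ∈ C, (connFinset pq : Set (Sym2 (Fin n))),
      e ≠ Sym2.mk a b → ¬ ∀ x ∈ e, OnArc a b x) :
    ((fun pq => Jop a b pq) '' C).Pairwise WeakSepCP := by
  intro x1 hx1 x2 hx2 hne
  obtain ⟨pq, hpqC, rfl⟩ := hx1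
  obtain ⟨rs, hrsC, rfl⟩ := hx2
  obtain ⟨⟨hl1, hnd1, hnd1', hdj1, hcyc1⟩, -⟩ := hC pq hpqC
  obtain ⟨⟨hl2, hnd2, hnd2', hdj2, hcyc2⟩, -⟩ := hC rs hrsC
  have hne' : pq ≠ rs := by rintro rfl; exact hne rfl
  show WeakSepCP (Jop a b pq) (Jop a b rs)
  have hwsO := hws hpqC hrsC hne'
  -- structural facts
  have hmP : ∀ p q p' q' : Fin n, (p, q) ∈ pq.1.zip pq.2 → (p', q') ∈ pq.1.zip pq.2 →
      p ≠ p' → Cyc4 (gg a p) (gg a p') (gg a q') (gg a q) ∨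
        Cyc4 (gg a p') (gg a p) (gg a q) (gg a q') :=
    fun p q p' q' h1 h2 h3 => edgeCyc hl1 hcyc1 a h1 h2 h3
  have hmR : ∀ p q p' q' : Fin n, (p, q) ∈ rs.1.zip rs.2 → (p', q') ∈ rs.1.zip rs.2 →
      p ≠ p' → Cyc4 (gg a p) (gg a p') (gg a q') (gg a q) ∨
        Cyc4 (gg a p') (gg a p) (gg a q) (gg a q') :=
    fun p q p' q' h1 h2 h3 => edgeCyc hl2 hcyc2 a h1 h2 h3
  have harcgen : ∀ t ∈ C, ∀ p q : Fin n, (p, q) ∈ t.1.zip t.2 →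
      Sym2.mk p q ≠ Sym2.mk a b → gg a b < gg a p ∨ gg a b < gg a q := by
    intro t htC p q hz hS
    have hmem : Sym2.mk p q ∈ ⋃ t ∈ C, (connFinset t : Set (Sym2 (Fin n))) := by
      refine Set.mem_iUnion₂.mpr ⟨t, htC, ?_⟩
      rw [Finset.mem_coe, connFinset, List.mem_toFinset]
      exact List.mem_map.mpr ⟨(p, q), hz, rfl⟩
    have h2 := harc _ hmem hS
    by_contra hcon
    push_neg at hcon
    apply h2
    intro u hu
    rcases Sym2.mem_iff.mp hu with rfl | rfl
    · exact hcon.1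
    · exact hcon.2
  have harcP := harcgen pq hpqC
  have harcR := harcgen rs hrsC
  -- swapped arc facts
  have harcP' : ∀ p q : Fin n, (p, q) ∈ pq.2.zip pq.1 →
      Sym2.mk p q ≠ Sym2.mk a b → gg a b < gg a p ∨ gg a b < gg a q := by
    intro p q h hS
    refine (harcP q p (zip_swap_mem h) ?_).symm
    intro hh
    exact hS ((Sym2.eq_swap (a := q) (b := p)).symm.trans hh)
  have harcR' : ∀ p q : Fin n, (p, q) ∈ rs.2.zip rs.1 →
      Sym2.mk p q ≠ Sym2.mk a b → gg a b < gg a p ∨ gg a b < gg a q := by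
    intro p q h hS
    refine (harcR q p (zip_swap_mem h) ?_).symm
    intro hh
    exact hS ((Sym2.eq_swap (a := q) (b := p)).symm.trans hh)
  -- "no {a,b}-connection" facts
  have hnone : ∀ (L1 L2 : List (Fin n)), ((a, b) ∈ L1.zip L2 → False) →
      ((b, a) ∈ L1.zip L2 → False) →
      ∀ pr ∈ L1.zip L2, Sym2.mk pr.1 pr.2 ≠ Sym2.mk a b := by
    rintro L1 L2 h1 h2 ⟨p, q⟩ hpr hS
    rcases Sym2.eq_iff.mp hS with ⟨rfl, rfl⟩ | ⟨rfl, rfl⟩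
    exacts [h1 hpr, h2 hpr]
  have hnswap : ∀ (L1 L2 : List (Fin n)),
      (∀ pr ∈ L1.zip L2, Sym2.mk pr.1 pr.2 ≠ Sym2.mk a b) →
      ∀ pr ∈ L2.zip L1, Sym2.mk pr.1 pr.2 ≠ Sym2.mk a b := by
    rintro L1 L2 h ⟨p, q⟩ hpr hS
    exact h (q, p) (zip_swap_mem hpr) ((Sym2.eq_swap (a := q) (b := p)).trans hS)
  by_cases t1 : (a, b) ∈ pq.1.zip pq.2
  · obtain ⟨hJp1, hJp2⟩ := jop_erase hl1 hnd1 hnd1' hdj1 t1 rfl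
    by_cases u1 : (a, b) ∈ rs.1.zip rs.2
    · -- types (1,1)
      obtain ⟨hJr1, hJr2⟩ := jop_erase hl2 hnd2 hnd2' hdj2 u1 rfl
      refine ⟨?_, ?_⟩ <;> rw [hJp1, hJp2, hJr1, hJr2]
      · exact both_typed_ws hdj1 hdj2 (List.of_mem_zip t1).1 (List.of_mem_zip t1).2
          (List.of_mem_zip u1).1 (List.of_mem_zip u1).2 (Or.inl ⟨rfl, rfl⟩)
          (Or.inl ⟨rfl, rfl⟩) hwsO.1
      · exact both_typed_ws hdj1 (fun x hx hx' => hdj2 x hx' hx) (List.of_mem_zip t1).1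
          (List.of_mem_zip t1).2 (List.of_mem_zip u1).2 (List.of_mem_zip u1).1
          (Or.inl ⟨rfl, rfl⟩) (Or.inr ⟨rfl, rfl⟩) hwsO.2
    · by_cases u2 : (b, a) ∈ rs.1.zip rs.2
      · -- types (1,2)
        obtain ⟨hJr1, hJr2⟩ := jop_erase hl2 hnd2 hnd2' hdj2 u2 Sym2.eq_swap
        refine ⟨?_, ?_⟩ <;> rw [hJp1, hJp2, hJr1, hJr2]
        · exact both_typed_ws hdj1 hdj2 (List.of_mem_zip t1).1 (List.of_mem_zip t1).2
            (List.of_mem_zip u2).1 (List.of_mem_zip u2).2 (Or.inl ⟨rfl, rfl⟩)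
            (Or.inr ⟨rfl, rfl⟩) hwsO.1
        · exact both_typed_ws hdj1 (fun x hx hx' => hdj2 x hx' hx) (List.of_mem_zip t1).1
            (List.of_mem_zip t1).2 (List.of_mem_zip u2).2 (List.of_mem_zip u2).1
            (Or.inl ⟨rfl, rfl⟩) (Or.inl ⟨rfl, rfl⟩) hwsO.2
      · -- types (1,0)
        have hnoneR := hnone rs.1 rs.2 u1 u2
        have hJr := jop_none hl2 hnoneR
        have H := onesided hl1 hl2 hnd1 hnd1' hnd2 hnd2' hdj1 hdj2 hmP hmR harcP
          (fun p q h => harcR p q h (hnoneR (p, q) h)) t1 hwsO.1 hwsO.2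
        refine ⟨?_, ?_⟩ <;> rw [hJp1, hJp2, hJr]
        · exact H.1
        · exact H.2
  · by_cases t2 : (b, a) ∈ pq.1.zip pq.2
    · obtain ⟨hJp1, hJp2⟩ := jop_erase hl1 hnd1 hnd1' hdj1 t2 Sym2.eq_swap
      by_cases u1 : (a, b) ∈ rs.1.zip rs.2
      · -- types (2,1)
        obtain ⟨hJr1, hJr2⟩ := jop_erase hl2 hnd2 hnd2' hdj2 u1 rfl
        refine ⟨?_, ?_⟩ <;> rw [hJp1, hJp2, hJr1, hJr2]
        · exact both_typed_ws hdj1 hdj2 (List.of_mem_zip t2).1 (List.of_mem_zip t2).2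
            (List.of_mem_zip u1).1 (List.of_mem_zip u1).2 (Or.inr ⟨rfl, rfl⟩)
            (Or.inl ⟨rfl, rfl⟩) hwsO.1
        · exact both_typed_ws hdj1 (fun x hx hx' => hdj2 x hx' hx) (List.of_mem_zip t2).1
            (List.of_mem_zip t2).2 (List.of_mem_zip u1).2 (List.of_mem_zip u1).1
            (Or.inr ⟨rfl, rfl⟩) (Or.inr ⟨rfl, rfl⟩) hwsO.2
      · by_cases u2 : (b, a) ∈ rs.1.zip rs.2
        · -- types (2,2)
          obtain ⟨hJr1, hJr2⟩ := jop_erase hl2 hnd2 hnd2' hdj2 u2 Sym2.eq_swap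
          refine ⟨?_, ?_⟩ <;> rw [hJp1, hJp2, hJr1, hJr2]
          · exact both_typed_ws hdj1 hdj2 (List.of_mem_zip t2).1 (List.of_mem_zip t2).2
              (List.of_mem_zip u2).1 (List.of_mem_zip u2).2 (Or.inr ⟨rfl, rfl⟩)
              (Or.inr ⟨rfl, rfl⟩) hwsO.1
          · exact both_typed_ws hdj1 (fun x hx hx' => hdj2 x hx' hx) (List.of_mem_zip t2).1
              (List.of_mem_zip t2).2 (List.of_mem_zip u2).2 (List.of_mem_zip u2).1
              (Or.inr ⟨rfl, rfl⟩) (Or.inl ⟨rfl, rfl⟩) hwsO.2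
        · -- types (2,0)
          have hnoneR := hnone rs.1 rs.2 u1 u2
          have hnoneR' := hnswap rs.1 rs.2 hnoneR
          have hJr := jop_none hl2 hnoneR
          have H := onesided hl1.symm hl2.symm hnd1' hnd1 hnd2' hnd2
            (fun x hx hx' => hdj1 x hx' hx) (fun x hx hx' => hdj2 x hx' hx)
            (match_swap hnd1 hmP) (match_swap hnd2 hmR) harcP'
            (fun p q h => harcR' p q h (hnoneR' (p, q) h)) (zip_swap_mem t2)
            (ws_symm hwsO.1) (ws_symm hwsO.2)
          refine ⟨?_, ?_⟩ <;> rw [hJp1, hJp2, hJr]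
          · exact ws_symm H.1
          · exact ws_symm H.2
    · have hnoneP := hnone pq.1 pq.2 t1 t2
      have hJp := jop_none hl1 hnoneP
      by_cases u1 : (a, b) ∈ rs.1.zip rs.2
      · -- types (0,1)
        obtain ⟨hJr1, hJr2⟩ := jop_erase hl2 hnd2 hnd2' hdj2 u1 rfl
        have hws1' : WeakSepSets (rs.1.toFinset ∪ pq.1.toFinset)
            (rs.2.toFinset ∪ pq.2.toFinset) := by
          have h := hwsO.1
          rwa [Finset.union_comm (pq.1.toFinset), Finset.union_comm (pq.2.toFinset)] at h
        have hws2' : WeakSepSets (rs.1.toFinset ∪ pq.2.toFinset)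
            (rs.2.toFinset ∪ pq.1.toFinset) := by
          have h := ws_symm hwsO.2
          rwa [Finset.union_comm (pq.2.toFinset), Finset.union_comm (pq.1.toFinset)] at h
        have H := onesided hl2 hl1 hnd2 hnd2' hnd1 hnd1' hdj2 hdj1 hmR hmP harcR
          (fun p q h => harcP p q h (hnoneP (p, q) h)) u1 hws1' hws2'
        refine ⟨?_, ?_⟩ <;> rw [hJp, hJr1, hJr2]
        · have h := H.1
          rwa [Finset.union_comm (rs.1.toFinset.erase a),
            Finset.union_comm (rs.2.toFinset.erase b)] at h
        · have h := ws_symm H.2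
          rwa [Finset.union_comm (rs.2.toFinset.erase b),
            Finset.union_comm (rs.1.toFinset.erase a)] at h
      · by_cases u2 : (b, a) ∈ rs.1.zip rs.2
        · -- types (0,2)
          obtain ⟨hJr1, hJr2⟩ := jop_erase hl2 hnd2 hnd2' hdj2 u2 Sym2.eq_swap
          have hnoneP' := hnswap pq.1 pq.2 hnoneP
          have hws1' : WeakSepSets (rs.2.toFinset ∪ pq.2.toFinset)
              (rs.1.toFinset ∪ pq.1.toFinset) := by
            have h := ws_symm hwsO.1
            rwa [Finset.union_comm (pq.2.toFinset), Finset.union_comm (pq.1.toFinset)] at h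
          have hws2' : WeakSepSets (rs.2.toFinset ∪ pq.1.toFinset)
              (rs.1.toFinset ∪ pq.2.toFinset) := by
            have h := hwsO.2
            rwa [Finset.union_comm (pq.1.toFinset), Finset.union_comm (pq.2.toFinset)] at h
          have H := onesided hl2.symm hl1.symm hnd2' hnd2 hnd1' hnd1
            (fun x hx hx' => hdj2 x hx' hx) (fun x hx hx' => hdj1 x hx' hx)
            (match_swap hnd2 hmR) (match_swap hnd1 hmP) harcR'
            (fun p q h => harcP' p q h (hnoneP' (p, q) h)) (zip_swap_mem u2)
            hws1' hws2'
          refine ⟨?_, ?_⟩ <;> rw [hJp, hJr1, hJr2]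
          · have h := ws_symm H.1
            rwa [Finset.union_comm (rs.1.toFinset.erase b),
              Finset.union_comm (rs.2.toFinset.erase a)] at h
          · have h := H.2
            rwa [Finset.union_comm (rs.2.toFinset.erase a),
              Finset.union_comm (rs.1.toFinset.erase b)] at h
        · -- types (0,0)
          have hnoneR := hnone rs.1 rs.2 u1 u2
          rw [hJp, jop_none hl2 hnoneR]
          exact hwsO

end CircularPlanar
end
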